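/- Let V be a finite-dimensional complex inner product space, φ : V → V self-adjoint, ν ∈ spec(φ) and u ∈ V_ν∖{0}. Then the stable set of the fixed point x = [u] of the projective flow Φ generated by φ is W⁺(x) = {y ∈ ℙ(V) : lim_{t→+∞} Φ(t,y) = x} = {[u + w] : w ∈ ⊕_{μ∈spec(φ), μ<ν} V_μ}, and the unstable set is W⁻(x) = {y ∈ ℙ(V) : lim_{t→−∞} Φ(t,y) = x} = {[u + w] : w ∈ ⊕_{μ∈spec(φ), μ>ν} V_μ}. -/

import Mathlib

open scoped LinearAlgebra.Projectivization
open Filter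

variable {V : Type*} [NormedAddCommGroup V] [InnerProductSpace ℂ V] [FiniteDimensional ℂ V]

/-- The quotient topology on complex projective space. -/
noncomputable instance instTopPV : TopologicalSpace (ℙ ℂ V) :=
  @instTopologicalSpaceQuotient _ (projectivizationSetoid ℂ V) _

theorem exp_toLinearMap_injective (ψ : V →L[ℂ] V) :
    Function.Injective (NormedSpace.exp ψ).toLinearMap := by
  obtain ⟨u, hu⟩ := NormedSpace.isUnit_exp_of_mem_ball (𝕂 := ℝ) (x := ψ)
    ((NormedSpace.expSeries_radius_eq_top ℝ (V →L[ℂ] V)).symm ▸ edist_lt_top _ _)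
  intro a b hab
  have h2 : (↑u⁻¹ * ↑u : V →L[ℂ] V) a = (↑u⁻¹ * ↑u : V →L[ℂ] V) b := by
    simp only [ContinuousLinearMap.mul_apply]
    rw [hu]
    exact congrArg _ hab
  simpa [u.inv_mul] using h2

/-- The projective flow generated by a linear map `φ`: `Φ(t, [v]) = [e^{tφ} v]`. -/
noncomputable def projFlow (φ : V →ₗ[ℂ] V) (t : ℝ) : ℙ ℂ V → ℙ ℂ V :=
  Projectivization.map
    (NormedSpace.exp (t • LinearMap.toContinuousLinearMap φ)).toLinearMap
    (exp_toLinearMap_injective _)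

/-!
Every nonzero `v` splits as `z + w`, where `z ≠ 0` lies in the eigenspace of the largest eigenvalue
`κ` occurring in `v` and `w` in the sum of the eigenspaces below `κ`. Then
`e^{-tκ} e^{tφ} v = z + e^{-tκ} e^{tφ} w → z`, so `Φ(t, [v]) → [z]` as `t → ∞`. Since `ℙ(V)` is
Hausdorff (the functions `[x] ↦ |⟪w, x⟫| / ‖x‖` separate points by the equality case of
Cauchy–Schwarz), `Φ(t, [v]) → [u]` forces `[z] = [u]`; hence `κ = ν` and `[v] = [u + w']` with `w'`
below `ν`. The unstable set of `φ` is the stable set of `-φ`.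
-/

open scoped InnerProductSpace Topology
open Module.End

theorem NormedSpace.exp_apply_of_apply_eq_smul {E : Type*} [NormedAddCommGroup E]
    [NormedSpace ℂ E] [CompleteSpace E] {A : E →L[ℂ] E} {a : ℂ} {x : E} (h : A x = a • x) :
    NormedSpace.exp A x = Complex.exp a • x := by
  have hpow : ∀ n : ℕ, (A ^ n) x = a ^ n • x := by
    intro n
    induction n with
    | zero => simp
    | succ n ih => rw [pow_succ, mul_apply_eq_comp, h, map_smul, ih, smul_smul, pow_succ']
  have hA := (NormedSpace.exp_series_hasSum_exp' (𝕂 := ℂ) A).mapL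
    (ContinuousLinearMap.apply ℂ E x)
  have ha := (NormedSpace.exp_series_hasSum_exp' (𝕂 := ℂ) a).smul_const x
  rw [← Complex.exp_eq_exp_ℂ] at ha
  refine hA.unique (ha.congr_fun fun n => ?_)
  simp [hpow, smul_smul]

theorem exp_smul_toContinuousLinearMap_apply_of_mem_eigenspace (φ : V →ₗ[ℂ] V) (t : ℝ)
    {μ : ℝ} {x : V} (hx : x ∈ eigenspace φ μ) :
    NormedSpace.exp (t • φ.toContinuousLinearMap) x = (Real.exp (t * μ) : ℂ) • x := by
  rw [Complex.ofReal_exp]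
  refine NormedSpace.exp_apply_of_apply_eq_smul ?_
  rw [smul_apply, LinearMap.coe_toContinuousLinearMap',
    mem_eigenspace_iff.1 hx, Complex.ofReal_mul, mul_smul, Complex.coe_smul t]

theorem tendsto_ofReal_exp_mul_atTop_nhds_zero {d : ℝ} (hd : d < 0) :
    Tendsto (fun t : ℝ => (Real.exp (t * d) : ℂ)) atTop (𝓝 0) := by
  simpa only [Function.comp_def, id, Complex.ofReal_zero] using
    (Complex.continuous_ofReal.tendsto 0).comp
      (Real.tendsto_exp_atBot.comp (tendsto_id.atTop_mul_const_of_neg hd))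

theorem tendsto_exp_smul_apply_of_mem_iSup_eigenspace (φ : V →ₗ[ℂ] V) {ν : ℝ} {S : Set ℝ}
    (hS : ∀ μ ∈ S, μ < ν) {w : V} (hw : w ∈ ⨆ μ ∈ S, eigenspace φ μ) :
    Tendsto (fun t : ℝ => (Real.exp (-(t * ν)) : ℂ) •
      NormedSpace.exp (t • φ.toContinuousLinearMap) w) atTop (𝓝 0) := by
  rw [iSup_subtype'] at hw
  induction hw using Submodule.iSup_induction' with
  | mem μ x hx =>
    have hμ : (μ : ℝ) - ν < 0 := sub_neg.2 (hS μ μ.2)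
    convert (tendsto_ofReal_exp_mul_atTop_nhds_zero hμ).smul_const x using 2 with t
    · rw [exp_smul_toContinuousLinearMap_apply_of_mem_eigenspace φ t hx, smul_smul,
        ← Complex.ofReal_mul, ← Real.exp_add]
      ring_nf
    · rw [zero_smul]
  | zero => simp
  | add x y _ _ hx hy => simpa only [map_add, smul_add, add_zero] using hx.add hy

namespace Projectivization

variable {E : Type*} [NormedAddCommGroup E] [InnerProductSpace ℂ E]

theorem tendsto_mk_of_tendsto_smul {α : Type*} {l : Filter α} {f : α → E} (hf : ∀ a, f a ≠ 0)
    {c : α → ℂ} (hc : ∀ a, c a ≠ 0) {z : E} (hz : z ≠ 0)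
    (h : Tendsto (fun a => c a • f a) l (𝓝 z)) :
    Tendsto (fun a => mk ℂ (f a) (hf a)) l (𝓝 (mk ℂ z hz)) := by
  have hmk : Continuous fun x : {v : E // v ≠ 0} => mk ℂ x.1 x.2 := continuous_quotient_mk'
  have hcf : Tendsto (fun a => (⟨c a • f a, smul_ne_zero (hc a) (hf a)⟩ : {v : E // v ≠ 0})) l
      (𝓝 ⟨z, hz⟩) := tendsto_subtype_rng.2 h
  exact ((hmk.tendsto _).comp hcf).congr fun a => (mk_eq_mk_iff' ℂ _ _ _ _).2 ⟨c a, rfl⟩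

noncomputable def normInnerDivNorm (w : E) : ℙ ℂ E → ℝ :=
  Projectivization.lift (fun x => ‖⟪w, (x : E)⟫_ℂ‖ / ‖(x : E)‖) <| by
    rintro ⟨-, ha⟩ ⟨b, hb⟩ t rfl
    have ht : t ≠ 0 := left_ne_zero_of_smul ha
    simp only [inner_smul_right, norm_mul, norm_smul]
    exact mul_div_mul_left _ _ (norm_ne_zero_iff.2 ht)

theorem continuous_normInnerDivNorm (w : E) : Continuous (normInnerDivNorm w) :=
  Continuous.quotient_lift ((continuous_const.inner continuous_subtype_val).norm.div
    continuous_subtype_val.norm fun x => norm_ne_zero_iff.2 x.2) _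

theorem normInnerDivNorm_mk_self {v : E} (hv : v ≠ 0) :
    normInnerDivNorm v (mk ℂ v hv) = ‖v‖ := by
  rw [normInnerDivNorm, Projectivization.lift_mk, inner_self_eq_norm_sq_to_K, norm_pow,
    RCLike.norm_ofReal, abs_norm, sq, mul_div_cancel_right₀ _ (norm_ne_zero_iff.2 hv)]

instance : T2Space (ℙ ℂ E) := by
  refine T2Space.of_injective_continuous (f := fun p w => normInnerDivNorm w p) ?_
    (continuous_pi fun w => continuous_normInnerDivNorm w)
  intro p q hpq
  induction p using Projectivization.ind with | h v hv => ?_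
  induction q using Projectivization.ind with | h w hw => ?_
  have hvw : normInnerDivNorm v (mk ℂ v hv) = normInnerDivNorm v (mk ℂ w hw) := congrFun hpq v
  rw [normInnerDivNorm_mk_self, normInnerDivNorm, Projectivization.lift_mk,
    eq_div_iff (norm_ne_zero_iff.2 hw)] at hvw
  obtain ⟨r, -, rfl⟩ := (norm_inner_eq_norm_iff hv hw).1 hvw.symm
  exact ((mk_eq_mk_iff' ℂ _ _ _ _).2 ⟨r, rfl⟩).symm

end Projectivization

theorem LinearMap.IsSymmetric.iSup_eigenspace_ofReal_eq_top {𝕜 E : Type*} [RCLike 𝕜]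
    [NormedAddCommGroup E] [InnerProductSpace 𝕜 E] [FiniteDimensional 𝕜 E] {T : E →ₗ[𝕜] E}
    (hT : T.IsSymmetric) : ⨆ μ : ℝ, eigenspace T (μ : 𝕜) = ⊤ := by
  rw [eq_top_iff, ← (hT.eigenvectorBasis rfl).toBasis.span_eq, Submodule.span_le]
  rintro _ ⟨i, rfl⟩
  exact Submodule.mem_iSup_of_mem _ (hT.hasEigenvector_eigenvectorBasis rfl i).1

theorem Module.End.exists_mem_eigenspace_sub_mem_iSup_eigenspace_lt {M : Type*} [AddCommGroup M]
    [Module ℂ M] {f : End ℂ M} (hf : ⨆ μ : ℝ, f.eigenspace μ = ⊤) {v : M} (hv : v ≠ 0) :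
    ∃ ν : ℝ, ∃ z ∈ f.eigenspace ν, z ≠ 0 ∧
      v - z ∈ ⨆ μ ∈ {μ : ℝ | f.HasEigenvalue μ ∧ μ < ν}, f.eigenspace μ := by
  classical
  obtain ⟨s, hs⟩ := Submodule.mem_iSup_iff_exists_finset.1 (hf ▸ Submodule.mem_top (x := v))
  obtain ⟨x, rfl⟩ := (Submodule.mem_iSup_finset_iff_exists_sum _ _).1 hs
  set T := s.filter fun μ => (x μ : M) ≠ 0
  have hT : T.Nonempty := by
    obtain ⟨μ, hμ, hxμ⟩ := Finset.exists_ne_zero_of_sum_ne_zero hv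
    exact ⟨μ, Finset.mem_filter.2 ⟨hμ, hxμ⟩⟩
  have hmax := T.max'_mem hT
  refine ⟨T.max' hT, x _, (x _).2, (Finset.mem_filter.1 hmax).2, ?_⟩
  rw [← Finset.sum_filter_ne_zero, ← Finset.add_sum_erase T _ hmax, add_sub_cancel_left]
  refine Submodule.sum_mem _ fun μ hμ => ?_
  have hμT := Finset.mem_of_mem_erase hμ
  have hlt : μ < T.max' hT := (T.le_max' μ hμT).lt_of_ne (Finset.ne_of_mem_erase hμ)
  exact Submodule.mem_iSup_of_mem μ <| Submodule.mem_iSup_of_mem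
    ⟨hasEigenvalue_of_hasEigenvector ⟨(x μ).2, (Finset.mem_filter.1 hμT).2⟩, hlt⟩ (x μ).2

theorem LinearMap.IsSymmetric.neg {𝕜 E : Type*} [RCLike 𝕜] [NormedAddCommGroup E]
    [InnerProductSpace 𝕜 E] {T : E →ₗ[𝕜] E} (hT : T.IsSymmetric) : (-T).IsSymmetric :=
  fun x y => by simp only [LinearMap.neg_apply, inner_neg_left, inner_neg_right, hT x y]

theorem Module.End.eigenspace_neg {R M : Type*} [CommRing R] [AddCommGroup M] [Module R M]
    (f : End R M) (μ : R) : eigenspace (-f) μ = eigenspace f (-μ) := by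
  ext x
  simp only [mem_eigenspace_iff, LinearMap.neg_apply, neg_smul, neg_eq_iff_eq_neg]

theorem Module.End.iSup_eigenspace_neg {M : Type*} [AddCommGroup M] [Module ℂ M] (f : End ℂ M)
    (P : ℝ → Prop) :
    ⨆ μ ∈ {μ : ℝ | HasEigenvalue (-f) μ ∧ P μ}, eigenspace (-f) μ
      = ⨆ μ ∈ {μ : ℝ | HasEigenvalue f μ ∧ P (-μ)}, eigenspace f μ := by
  rw [← (Equiv.neg ℝ).iSup_comp]
  simp [eigenspace_neg, hasEigenvalue_neg_iff]

theorem projFlow_mk (φ : V →ₗ[ℂ] V) (t : ℝ) {v : V} (hv : v ≠ 0) :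
    projFlow φ t (Projectivization.mk ℂ v hv) = Projectivization.mk ℂ
      (NormedSpace.exp (t • φ.toContinuousLinearMap) v)
      ((map_ne_zero_iff _ (exp_toLinearMap_injective _)).2 hv) :=
  Projectivization.map_mk _ _ _ _

theorem projFlow_neg (φ : V →ₗ[ℂ] V) (t : ℝ) : projFlow (-φ) t = projFlow φ (-t) := by
  funext y
  induction y using Projectivization.ind with | h v hv => ?_
  simp only [projFlow_mk, map_neg, smul_neg, neg_smul]

theorem tendsto_projFlow_mk_add_atTop (φ : V →ₗ[ℂ] V) {ν : ℝ} {z : V}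
    (hz : z ∈ eigenspace φ ν) (hz0 : z ≠ 0) {S : Set ℝ} (hS : ∀ μ ∈ S, μ < ν) {w : V}
    (hw : w ∈ ⨆ μ ∈ S, eigenspace φ μ) (h : z + w ≠ 0) :
    Tendsto (fun t => projFlow φ t (Projectivization.mk ℂ (z + w) h)) atTop
      (𝓝 (Projectivization.mk ℂ z hz0)) := by
  simp only [projFlow_mk]
  refine Projectivization.tendsto_mk_of_tendsto_smul _
    (c := fun t : ℝ => (Real.exp (-(t * ν)) : ℂ)) (fun t => by exact_mod_cast (Real.exp_pos _).ne')
    hz0 ?_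
  have hsplit : ∀ t : ℝ, (Real.exp (-(t * ν)) : ℂ) •
      NormedSpace.exp (t • φ.toContinuousLinearMap) (z + w) =
      z + (Real.exp (-(t * ν)) : ℂ) • NormedSpace.exp (t • φ.toContinuousLinearMap) w := by
    intro t
    rw [map_add, smul_add, exp_smul_toContinuousLinearMap_apply_of_mem_eigenspace φ t hz,
      smul_smul, ← Complex.ofReal_mul, ← Real.exp_add, neg_add_cancel, Real.exp_zero,
      Complex.ofReal_one, one_smul]
  simpa only [hsplit, add_zero] using
    tendsto_const_nhds.add (tendsto_exp_smul_apply_of_mem_iSup_eigenspace φ hS hw)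

theorem setOf_tendsto_projFlow_atTop_eq {φ : V →ₗ[ℂ] V} (hφ : φ.IsSymmetric) {ν : ℝ} {u : V}
    (hu : u ∈ eigenspace φ ν) (hu0 : u ≠ 0) :
    {y : ℙ ℂ V | Tendsto (fun t : ℝ => projFlow φ t y) atTop (𝓝 (Projectivization.mk ℂ u hu0))}
      = {y : ℙ ℂ V | ∃ w ∈ ⨆ μ ∈ {μ : ℝ | HasEigenvalue φ μ ∧ μ < ν}, eigenspace φ μ,
          ∃ h : u + w ≠ 0, y = Projectivization.mk ℂ (u + w) h} := by
  ext y
  induction y using Projectivization.ind with | h v hv => ?_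
  refine ⟨fun hlim => ?_, ?_⟩
  · obtain ⟨κ, z, hz, hz0, hw⟩ :=
      exists_mem_eigenspace_sub_mem_iSup_eigenspace_lt hφ.iSup_eigenspace_ofReal_eq_top hv
    have hsplit : z + (v - z) ≠ 0 := by rwa [add_sub_cancel]
    have hlim' := tendsto_projFlow_mk_add_atTop φ hz hz0 (fun μ hμ => hμ.2) hw hsplit
    simp only [add_sub_cancel] at hlim'
    obtain ⟨a, rfl⟩ :=
      (Projectivization.mk_eq_mk_iff' ℂ _ _ _ _).1 (tendsto_nhds_unique hlim' hlim)
    have ha : a ≠ 0 := left_ne_zero_of_smul hz0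
    have hκ : κ = ν := by
      have hsmul := (mem_eigenspace_iff.1 hz).symm.trans
        (mem_eigenspace_iff.1 (Submodule.smul_mem _ a hu))
      exact_mod_cast smul_left_injective ℂ hz0 hsmul
    subst hκ
    have hv_eq : a • (u + a⁻¹ • (v - a • u)) = v := by
      rw [smul_add, smul_smul, mul_inv_cancel₀ ha, one_smul, add_sub_cancel]
    refine ⟨a⁻¹ • (v - a • u), Submodule.smul_mem _ _ hw,
      fun h0 => hv (by rw [← hv_eq, h0, smul_zero]), ?_⟩
    exact (Projectivization.mk_eq_mk_iff' ℂ _ _ _ _).2 ⟨a, hv_eq⟩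
  · rintro ⟨w, hw, h, hy⟩
    rw [hy]
    exact tendsto_projFlow_mk_add_atTop φ hu hu0 (fun μ hμ => hμ.2) hw h

theorem projFlow_stable_unstable_sets_general
    {V : Type*} [NormedAddCommGroup V] [InnerProductSpace ℂ V] [FiniteDimensional ℂ V]
    (φ : V →ₗ[ℂ] V) (hφ : LinearMap.IsSymmetric φ)
    (ν : ℝ)
    (u : V) (hu : u ∈ Module.End.eigenspace φ (ν : ℂ)) (hu0 : u ≠ 0) :
    ({y : ℙ ℂ V | Tendsto (fun t : ℝ => projFlow φ t y) atTop
        (nhds (Projectivization.mk ℂ u hu0))}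
      = {y : ℙ ℂ V | ∃ w ∈ (⨆ μ ∈ {μ : ℝ | Module.End.HasEigenvalue φ (μ : ℂ) ∧ μ < ν},
            Module.End.eigenspace φ (μ : ℂ)),
          ∃ h : u + w ≠ 0, y = Projectivization.mk ℂ (u + w) h}) ∧
    ({y : ℙ ℂ V | Tendsto (fun t : ℝ => projFlow φ t y) atBot
        (nhds (Projectivization.mk ℂ u hu0))}
      = {y : ℙ ℂ V | ∃ w ∈ (⨆ μ ∈ {μ : ℝ | Module.End.HasEigenvalue φ (μ : ℂ) ∧ ν < μ},
            Module.End.eigenspace φ (μ : ℂ)),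
          ∃ h : u + w ≠ 0, y = Projectivization.mk ℂ (u + w) h}) := by
  refine ⟨setOf_tendsto_projFlow_atTop_eq hφ hu hu0, ?_⟩
  have hu' : u ∈ eigenspace (-φ) (-ν : ℝ) := by
    rwa [Complex.ofReal_neg, eigenspace_neg, neg_neg]
  calc _ = {y : ℙ ℂ V | Tendsto (fun t : ℝ => projFlow (-φ) t y) atTop
        (𝓝 (Projectivization.mk ℂ u hu0))} := by
        ext y
        simp only [projFlow_neg]
        exact tendsto_comp_neg_atTop_iff.symm
    _ = _ := setOf_tendsto_projFlow_atTop_eq hφ.neg hu' hu0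
    _ = _ := by simp only [iSup_eigenspace_neg, neg_lt_neg_iff]

/-- For the projective flow generated by a self-adjoint `φ`, the stable
set of the fixed point `x = [u]`, `u ∈ V_ν \ {0}`, is `{[u+w] : w ∈ ⊕_{μ<ν} V_μ}` and the
unstable set is `{[u+w] : w ∈ ⊕_{μ>ν} V_μ}`. -/
theorem projFlow_stable_unstable_sets
    {V : Type*} [NormedAddCommGroup V] [InnerProductSpace ℂ V] [FiniteDimensional ℂ V]
    (φ : V →ₗ[ℂ] V) (hφ : LinearMap.IsSymmetric φ)
    (ν : ℝ) (hν : Module.End.HasEigenvalue φ (ν : ℂ))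
    (u : V) (hu : u ∈ Module.End.eigenspace φ (ν : ℂ)) (hu0 : u ≠ 0) :
    ({y : ℙ ℂ V | Tendsto (fun t : ℝ => projFlow φ t y) atTop
        (nhds (Projectivization.mk ℂ u hu0))}
      = {y : ℙ ℂ V | ∃ w ∈ (⨆ μ ∈ {μ : ℝ | Module.End.HasEigenvalue φ (μ : ℂ) ∧ μ < ν},
            Module.End.eigenspace φ (μ : ℂ)),
          ∃ h : u + w ≠ 0, y = Projectivization.mk ℂ (u + w) h}) ∧
    ({y : ℙ ℂ V | Tendsto (fun t : ℝ => projFlow φ t y) atBot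
        (nhds (Projectivization.mk ℂ u hu0))}
      = {y : ℙ ℂ V | ∃ w ∈ (⨆ μ ∈ {μ : ℝ | Module.End.HasEigenvalue φ (μ : ℂ) ∧ ν < μ},
            Module.End.eigenspace φ (μ : ℂ)),
          ∃ h : u + w ≠ 0, y = Projectivization.mk ℂ (u + w) h}) :=
  projFlow_stable_unstable_sets_general φ hφ ν u hu hu0
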